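/- Let A, B ∈ ℝ^{n×s} with AᵀA, BᵀB invertible, suppose ⦀CᵀA(AᵀA)⁻¹⦀_∞ ≤ 1−μ for some matrix C ∈ ℝ^{n×(K−s)} and μ ∈ (0,1], λ_min(BᵀB/c) ≥ C_min for some c > 0, and (1/c)‖AᵀA − BᵀB‖₂ ≤ δ. Then ⦀CᵀA[(BᵀB)⁻¹ − (AᵀA)⁻¹]⦀_∞ ≤ s(1−μ)δ/C_min, where ⦀M⦀_∞ is the maximum-absolute-row-sum norm and s is the number of columns of A. -/
import Mathlib


open scoped BigOperators
open Matrix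

lemma coord_le_sqrt_sum {s : ℕ} (x : Fin s → ℝ) (k : Fin s) :
    |x k| ≤ Real.sqrt (∑ i, (x i) ^ 2) := by
  rw [← Real.sqrt_sq_eq_abs]
  exact Real.sqrt_le_sqrt (Finset.single_le_sum (fun i _ => sq_nonneg (x i))
    (Finset.mem_univ k))

/-- incoherence perturbation bound. -/
theorem stmt_7 (n s m : ℕ) (A B : Matrix (Fin n) (Fin s) ℝ)
    (C : Matrix (Fin n) (Fin m) ℝ) (μ c Cmin δ : ℝ)
    (hμ : 0 < μ) (hμ1 : μ ≤ 1) (hc : 0 < c) (hCmin : 0 < Cmin) (hδ : 0 ≤ δ)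
    (hAinv : IsUnit (Aᵀ * A).det) (hBinv : IsUnit (Bᵀ * B).det)
    (hincoh : ∀ i, ∑ j, |(Cᵀ * A * (Aᵀ * A)⁻¹) i j| ≤ 1 - μ)
    (hmin : ∀ x : Fin s → ℝ, Real.sqrt (∑ i, (x i) ^ 2) = 1 →
      Cmin ≤ (1 / c) * ∑ i, ∑ j, x i * (Bᵀ * B) i j * x j)
    (hspec : ∀ x : Fin s → ℝ,
      Real.sqrt (∑ i, (((Aᵀ * A - Bᵀ * B) *ᵥ x) i) ^ 2) ≤
        c * δ * Real.sqrt (∑ i, (x i) ^ 2)) :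
    ∀ i, ∑ j, |(Cᵀ * A * ((Bᵀ * B)⁻¹ - (Aᵀ * A)⁻¹)) i j| ≤
      s * (1 - μ) * δ / Cmin := by
  set H : Matrix (Fin s) (Fin s) ℝ := Aᵀ * A with hHdef
  set G : Matrix (Fin s) (Fin s) ℝ := Bᵀ * B with hGdef
  have hHinv : H⁻¹ * H = 1 := Matrix.nonsing_inv_mul _ hAinv
  have hGinv : G * G⁻¹ = 1 := Matrix.mul_nonsing_inv _ hBinv
  -- factorization
  have hfact : H⁻¹ * ((H - G) * G⁻¹) = G⁻¹ - H⁻¹ := by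
    rw [Matrix.sub_mul, hGinv, Matrix.mul_sub, ← Matrix.mul_assoc, hHinv,
      Matrix.one_mul, Matrix.mul_one]
  have key : Cᵀ * A * (G⁻¹ - H⁻¹) =
      (Cᵀ * A * H⁻¹) * ((H - G) * G⁻¹) := by
    rw [Matrix.mul_assoc (Cᵀ * A) H⁻¹, hfact]
  -- scaled quadratic-form lower bound
  have hmin' : ∀ x : Fin s → ℝ,
      c * Cmin * (∑ i, (x i) ^ 2) ≤ ∑ i, ∑ j, x i * G i j * x j := by
    intro x
    rcases eq_or_ne (∑ i, (x i) ^ 2) 0 with h0 | h0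
    · have hx : ∀ i ∈ Finset.univ, x i ^ 2 = 0 :=
        (Finset.sum_eq_zero_iff_of_nonneg (fun i _ => sq_nonneg (x i))).1 h0
      have hx' : ∀ i : Fin s, x i = 0 := fun i =>
        (pow_eq_zero_iff two_ne_zero).1 (hx i (Finset.mem_univ i))
      simp [hx', h0]
    · set S := ∑ i, (x i) ^ 2 with hSdef
      have hSnn : 0 ≤ S := Finset.sum_nonneg fun i _ => sq_nonneg _
      set r := Real.sqrt S with hrdef
      have hr : 0 < r := Real.sqrt_pos.2 (lt_of_le_of_ne hSnn (Ne.symm h0))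
      have hrr : r * r = S := Real.mul_self_sqrt hSnn
      have hu : Real.sqrt (∑ i, (r⁻¹ * x i) ^ 2) = 1 := by
        have h1 : ∑ i, (r⁻¹ * x i) ^ 2 = (r⁻¹) ^ 2 * S := by
          rw [Finset.mul_sum]; exact Finset.sum_congr rfl fun i _ => by ring
        rw [h1, Real.sqrt_mul (sq_nonneg _), Real.sqrt_sq (inv_nonneg.2 hr.le)]
        rw [← hrdef]
        field_simp
      have hQ := hmin (fun i => r⁻¹ * x i) hu
      set Q := ∑ i, ∑ j, x i * G i j * x j with hQdef
      have hQeq : ∑ i, ∑ j, (r⁻¹ * x i) * G i j * (r⁻¹ * x j) =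
          r⁻¹ * r⁻¹ * Q := by
        rw [hQdef, Finset.mul_sum]
        refine Finset.sum_congr rfl fun i _ => ?_
        rw [Finset.mul_sum]
        exact Finset.sum_congr rfl fun j _ => by ring
      rw [hQeq] at hQ
      have h2 : c * Cmin ≤ r⁻¹ * r⁻¹ * Q := by
        have := mul_le_mul_of_nonneg_left hQ hc.le
        calc c * Cmin ≤ c * ((1 / c) * (r⁻¹ * r⁻¹ * Q)) := this
          _ = r⁻¹ * r⁻¹ * Q := by field_simp <;> ring
      have h4 : c * Cmin * (r * r) ≤ (r⁻¹ * r⁻¹ * Q) * (r * r) :=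
        mul_le_mul_of_nonneg_right h2 (by positivity)
      have hri : r⁻¹ * r = 1 := inv_mul_cancel₀ hr.ne'
      have h3 : (r⁻¹ * r⁻¹ * Q) * (r * r) = Q := by
        calc (r⁻¹ * r⁻¹ * Q) * (r * r) = (r⁻¹ * r) * ((r⁻¹ * r) * Q) := by ring
          _ = Q := by rw [hri]; ring
      rw [h3, hrr] at h4
      exact h4
  -- entrywise bound on (H - G) * G⁻¹
  have hM : ∀ k j, |((H - G) * G⁻¹) k j| ≤ δ / Cmin := by
    intro k j
    set y : Fin s → ℝ := fun l => G⁻¹ l j with hydef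
    have hMy : ((H - G) * G⁻¹) k j = ((H - G) *ᵥ y) k := by
      simp [Matrix.mul_apply, Matrix.mulVec, dotProduct, hydef]
    set Sy := ∑ i, (y i) ^ 2 with hSydef
    have hSynn : 0 ≤ Sy := Finset.sum_nonneg fun i _ => sq_nonneg _
    -- quadratic form of y equals y j
    have hQy : ∑ a, ∑ b, y a * G a b * y b = y j := by
      have h1 : ∀ a, ∑ b, y a * G a b * y b = y a * (G * G⁻¹) a j := by
        intro a
        rw [Matrix.mul_apply, Finset.mul_sum]
        exact Finset.sum_congr rfl fun b _ => by simp [hydef]; ring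
      calc ∑ a, ∑ b, y a * G a b * y b = ∑ a, y a * (G * G⁻¹) a j := by
            exact Finset.sum_congr rfl fun a _ => h1 a
        _ = ∑ a, y a * (1 : Matrix (Fin s) (Fin s) ℝ) a j := by rw [hGinv]
        _ = y j := by
            rw [Finset.sum_eq_single j]
            · simp
            · intro b _ hb; simp [Matrix.one_apply, hb]
            · intro h; exact absurd (Finset.mem_univ j) h
    have hlow := hmin' y
    rw [hQy] at hlow
    have hyj : y j ≤ Real.sqrt Sy := le_trans (le_abs_self _) (coord_le_sqrt_sum y j)
    have hsq : Real.sqrt Sy * Real.sqrt Sy = Sy := Real.mul_self_sqrt hSynn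
    -- sqrt Sy ≤ 1/(c*Cmin)
    have hnormy : Real.sqrt Sy ≤ 1 / (c * Cmin) := by
      rcases eq_or_lt_of_le (Real.sqrt_nonneg Sy) with h0 | h0
      · rw [← h0]; positivity
      · have hlow' : (c * Cmin * Real.sqrt Sy) * Real.sqrt Sy ≤ 1 * Real.sqrt Sy := by
          have : c * Cmin * (Real.sqrt Sy * Real.sqrt Sy) ≤ Real.sqrt Sy := by
            rw [hsq]; exact le_trans hlow hyj
          nlinarith [this]
        have h1 : c * Cmin * Real.sqrt Sy ≤ 1 := le_of_mul_le_mul_right hlow' h0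
        rw [le_div_iff₀ (mul_pos hc hCmin)]
        nlinarith [h1]
    have hspecy := hspec y
    have habs : |((H - G) *ᵥ y) k| ≤ Real.sqrt (∑ i, (((H - G) *ᵥ y) i) ^ 2) :=
      coord_le_sqrt_sum _ k
    have hchain : Real.sqrt (∑ i, (((H - G) *ᵥ y) i) ^ 2) ≤ δ / Cmin := by
      refine le_trans hspecy ?_
      calc c * δ * Real.sqrt Sy ≤ c * δ * (1 / (c * Cmin)) := by
            exact mul_le_mul_of_nonneg_left hnormy (by positivity)
        _ = δ / Cmin := by field_simp <;> ring
    rw [hMy]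
    exact le_trans habs hchain
  -- final assembly
  intro i
  rw [key]
  set P := Cᵀ * A * H⁻¹ with hPdef
  set M := (H - G) * G⁻¹ with hMdef
  have step1 : ∑ j, |(P * M) i j| ≤ ∑ j, ∑ k, |P i k| * |M k j| := by
    refine Finset.sum_le_sum fun j _ => ?_
    rw [Matrix.mul_apply]
    refine le_trans (Finset.abs_sum_le_sum_abs _ _) ?_
    exact Finset.sum_le_sum fun k _ => (abs_mul _ _).le
  have step2 : ∑ j, ∑ k, |P i k| * |M k j| = ∑ k, ∑ j, |P i k| * |M k j| :=
    Finset.sum_comm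
  have step3 : ∑ k, ∑ j, |P i k| * |M k j| ≤ ∑ k, |P i k| * (s * (δ / Cmin)) := by
    refine Finset.sum_le_sum fun k _ => ?_
    calc ∑ j, |P i k| * |M k j| ≤ ∑ j : Fin s, |P i k| * (δ / Cmin) :=
          Finset.sum_le_sum fun j _ =>
            mul_le_mul_of_nonneg_left (hM k j) (abs_nonneg _)
      _ = s * (|P i k| * (δ / Cmin)) := by
          rw [Finset.sum_const, Finset.card_univ, Fintype.card_fin, nsmul_eq_mul]
      _ = |P i k| * (s * (δ / Cmin)) := by ring
  have step4 : ∑ k, |P i k| * (s * (δ / Cmin)) =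
      (∑ k, |P i k|) * (s * (δ / Cmin)) := by rw [Finset.sum_mul]
  have step5 : (∑ k, |P i k|) * (s * (δ / Cmin)) ≤
      (1 - μ) * (s * (δ / Cmin)) :=
    mul_le_mul_of_nonneg_right (hincoh i) (by positivity)
  have : (1 - μ) * (s * (δ / Cmin)) = s * (1 - μ) * δ / Cmin := by ring
  linarith [step1, step3, step5, step2.le, step4.le,
    (le_of_eq this : (1 - μ) * (s * (δ / Cmin)) ≤ s * (1 - μ) * δ / Cmin)]
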